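/- Let X be a simplicial set such that for every n ≥ 2 the map D_n : X_n → X₁ × X_{n-1} given by D_n(x) = ((d₂)^{n-1}(x), d₀(x)) is a bijection from X_n onto the set {(x₁, x₂) ∈ X₁ × X_{n-1} : d₀(x₁) = (d₁)^{n-1}(x₂)}. Then there is a small category C whose set of objects is X₀ and whose set of morphisms is X₁ — in which each f ∈ X₁ is a morphism from d₀(f) to d₁(f), the identity morphism of x ∈ X₀ is s₀(x), and the composite of f₁, f₂ ∈ X₁ with d₀(f₁) = d₁(f₂) is d₁(D₂⁻¹(f₁, f₂)) — such that X is isomorphic, as a simplicial set, to the nerve of C. -/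

import Mathlib

/-!
The hypothesis is the inductive form of the strict Segal condition: every simplex is
determined by its spine, and every path of edges is the spine of some simplex. In a strict
Segal simplicial set two composable edges are the outer faces of a unique 2-simplex, whose
inner face is their composite; associativity is read off the edges of the 3-simplex spanned by
three composable edges. Sending a simplex to its chain of vertices and edges gives a map from
`X` to the nerve of this category which commutes with taking spines. Both sides are strict
Segal and the map is bijective on vertices and edges, hence it is bijective in every degree.
-/

open CategoryTheory Simplicial

universe u

namespace Paper

/-- Iterated second face map `(d₂)ⁿ : Xₙ₊₁ → X₁`. -/
def iterD2 (X : SSet.{u}) : ∀ n : ℕ, X _⦋n + 1⦌ → X _⦋1⦌ := fun n x =>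
  match n, x with
  | 0, x => x
  | n + 1, x => iterD2 X n (X.δ 2 x)

/-- Iterated first face map `(d₁)ⁿ : Xₙ → X₀`. -/
def iterD1 (X : SSet.{u}) : ∀ n : ℕ, X _⦋n⦌ → X _⦋0⦌ := fun n x =>
  match n, x with
  | 0, x => x
  | n + 1, x => iterD1 X n (X.δ 1 x)

/-- Compatibility of a category structure on the vertices of `X` with the simplicial
structure: morphisms `a ⟶ b` correspond to `1`-simplices `f` with `d₀ f = a` and
`d₁ f = b`, identities to degenerate simplices, composition to
`f₁ ∘ f₂ = d₁(D₂⁻¹(f₁, f₂))`, and `X` is isomorphic, as a simplicial set, to the nerve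
(with the opposite-orientation convention of the paper) of the category. -/
def NerveCompat (X : SSet.{u}) (C : Type u) [SmallCategory C] (e : C ≃ X _⦋0⦌) : Prop :=
  ∃ he : ∀ a b : C, (a ⟶ b) ≃ {f : X _⦋1⦌ // X.δ 0 f = e a ∧ X.δ 1 f = e b},
    (∀ a : C, ((he a a) (𝟙 a) : X _⦋1⦌) = X.σ 0 (e a)) ∧
    (∀ (a b c : C) (f : a ⟶ b) (g : b ⟶ c) (x : X _⦋2⦌),
      X.δ 2 x = ((he b c) g : X _⦋1⦌) → X.δ 0 x = ((he a b) f : X _⦋1⦌) →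
        ((he a c) (f ≫ g) : X _⦋1⦌) = X.δ 1 x) ∧
    Nonempty (X ≅ CategoryTheory.nerve Cᵒᵖ)

end Paper

open SimplexCategory Opposite

def CategoryTheory.nerveOpOpIso (C : Type u) [SmallCategory C] : nerve C ≅ nerve Cᵒᵖᵒᵖ where
  hom := nerveMap (opOp C)
  inv := nerveMap (unopUnop C)

namespace SSet

variable {X Y : SSet.{u}}

def StrictSegalCore.zero (X : SSet.{u}) : X.StrictSegalCore 0 where
  concat e _ _ := e
  map_mkOfSucc_zero_concat e _ _ := by simp
  δ₀_concat _ _ h := by simpa [const_eq_id] using h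
  injective h₁ _ := by simpa using h₁

noncomputable def StrictSegalCore.ofBijOn {n : ℕ}
    (h : Set.BijOn (fun x : X _⦋n + 1⦌ => (X.map (mkOfSucc 0).op x, X.δ 0 x)) Set.univ
      {q | X.δ 0 q.1 = X.map (SimplexCategory.const ⦋0⦌ ⦋n⦌ 0).op q.2}) :
    X.StrictSegalCore n where
  concat e s hes := (h.surjOn (show (e, s) ∈ _ from hes)).choose
  map_mkOfSucc_zero_concat e s hes :=
    congrArg Prod.fst (h.surjOn (show (e, s) ∈ _ from hes)).choose_spec.2
  δ₀_concat e s hes := congrArg Prod.snd (h.surjOn (show (e, s) ∈ _ from hes)).choose_spec.2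
  injective h₁ h₀ := h.injOn trivial trivial (Prod.ext h₁ h₀)

theorem isStrictSegal_of_bijOn
    (h : ∀ n : ℕ, Set.BijOn (fun x : X _⦋n + 2⦌ => (X.map (mkOfSucc 0).op x, X.δ 0 x)) Set.univ
      {q | X.δ 0 q.1 = X.map (SimplexCategory.const ⦋0⦌ ⦋n + 1⦌ 0).op q.2}) :
    X.IsStrictSegal :=
  (StrictSegal.ofCore fun n => match n with
    | 0 => StrictSegalCore.zero X
    | n + 1 => StrictSegalCore.ofBijOn (h n)).isStrictSegal

def Path.cons {n : ℕ} (e : X _⦋1⦌) (p : X.Path n) (h : X.δ 0 e = p.vertex 0) :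
    X.Path (n + 1) where
  vertex := Fin.cons (X.δ 1 e) p.vertex
  arrow := Fin.cons e p.arrow
  arrow_src i := Fin.cases rfl (fun k => p.arrow_src k) i
  arrow_tgt i := Fin.cases h (fun k => p.arrow_tgt k) i

lemma Path.cons_interval_one {n : ℕ} (e : X _⦋1⦌) (p : X.Path n) (h : X.δ 0 e = p.vertex 0) :
    (p.cons e h).interval 1 n = p := by
  have hsucc : ∀ {m : ℕ} (i : Fin m), (⟨1 + i, by omega⟩ : Fin (m + 1)) = i.succ := fun i => by
    ext; simp [add_comm]
  ext i
  · exact congrArg (Fin.cons (X.δ 1 e) p.vertex) (hsucc i) |>.trans (Fin.cons_succ _ _ _)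
  · exact congrArg (Fin.cons e p.arrow) (hsucc i) |>.trans (Fin.cons_succ _ _ _)

theorem Path.map_bijective {n : ℕ} (φ : X ⟶ Y) (h₀ : Function.Bijective (φ.app (op ⦋0⦌)))
    (h₁ : Function.Bijective (φ.app (op ⦋1⦌))) :
    Function.Bijective fun p : X.Path n => p.map φ := by
  refine ⟨fun p q h => Path.ext (funext fun i => h₀.1 (Path.congr_vertex h i))
    (funext fun i => h₁.1 (Path.congr_arrow h i)), fun q => ?_⟩
  let v : Fin (n + 1) → X _⦋0⦌ := fun i => Function.surjInv h₀.2 (q.vertex i)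
  let a : Fin n → X _⦋1⦌ := fun i => Function.surjInv h₁.2 (q.arrow i)
  have hsrc : ∀ i, X.δ 1 (a i) = v i.castSucc := fun i => h₀.1 <| by
    rw [δ_naturality_apply, Function.surjInv_eq h₁.2, Function.surjInv_eq h₀.2, q.arrow_src]
  have htgt : ∀ i, X.δ 0 (a i) = v i.succ := fun i => h₀.1 <| by
    rw [δ_naturality_apply, Function.surjInv_eq h₁.2, Function.surjInv_eq h₀.2, q.arrow_tgt]
  exact ⟨⟨v, a, hsrc, htgt⟩, Path.ext (funext fun i => Function.surjInv_eq h₀.2 _)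
    (funext fun i => Function.surjInv_eq h₁.2 _)⟩

theorem spine_app {n : ℕ} (φ : X ⟶ Y) (x : X _⦋n⦌) :
    Y.spine n (φ.app _ x) = (X.spine n x).map φ :=
  Path.ext (funext fun _ => (NatTrans.naturality_apply φ _ x).symm)
    (funext fun _ => (NatTrans.naturality_apply φ _ x).symm)

theorem IsStrictSegal.isIso_of_bijective_app_zero_one [X.IsStrictSegal] [Y.IsStrictSegal]
    (φ : X ⟶ Y) (h₀ : Function.Bijective (φ.app (op ⦋0⦌)))
    (h₁ : Function.Bijective (φ.app (op ⦋1⦌))) : IsIso φ := by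
  have hφ : ∀ n : ℕ, Function.Bijective (φ.app (op ⦋n⦌)) := fun n => by
    rw [← (IsStrictSegal.segal n).of_comp_iff']
    have hcomm : Y.spine n ∘ φ.app (op ⦋n⦌) = (fun p => p.map φ) ∘ X.spine n :=
      funext (spine_app φ)
    rw [hcomm]
    exact (Path.map_bijective φ h₀ h₁).comp (IsStrictSegal.segal n)
  have : ∀ Δ : SimplexCategoryᵒᵖ, IsIso (φ.app Δ) := fun Δ =>
    (isIso_iff_bijective _).2 (hφ Δ.unop.len)
  exact NatIso.isIso_of_isIso_app φ

lemma map_op_map_op {a b c : SimplexCategory} (f : a ⟶ b) (g : b ⟶ c) (x : X.obj (op c)) :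
    X.map f.op (X.map g.op x) = X.map (f ≫ g).op x := by
  rw [op_comp, Functor.map_comp_apply]

namespace Edge

variable {x₀ x₁ x₂ x₃ : X _⦋0⦌} {e₀₁ : Edge x₀ x₁} {e₁₂ : Edge x₁ x₂}

def equivSubtype : Edge x₀ x₁ ≃ {f : X _⦋1⦌ // X.δ 0 f = x₁ ∧ X.δ 1 f = x₀} where
  toFun e := ⟨e.edge, e.tgt_eq, e.src_eq⟩
  invFun f := Edge.mk f.1 f.2.2 f.2.1
  left_inv _ := rfl
  right_inv _ := rfl

theorem CompStruct.exists_of_simplex_faces (s : X _⦋2⦌) (h₂ : X.δ 2 s = e₀₁.edge)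
    (h₀ : X.δ 0 s = e₁₂.edge) :
    ∃ e₀₂ : Edge x₀ x₂, e₀₂.edge = X.δ 1 s ∧ Nonempty (CompStruct e₀₁ e₁₂ e₀₂) :=
  ⟨Edge.mk (X.δ 1 s)
      (by rw [← e₀₁.src_eq, ← h₂]; exact δ_comp_δ_self_apply (i := 1) s)
      (by rw [← e₁₂.tgt_eq, ← h₀]; exact δ_comp_δ_apply (i := 0) (j := 0) le_rfl s),
    rfl, ⟨CompStruct.mk s h₂ h₀⟩⟩

end Edge

section IsStrictSegal

variable [X.IsStrictSegal]

theorem IsStrictSegal.ext_of_δ₀ {n : ℕ} {s s' : X _⦋n + 1⦌}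
    (h₁ : X.map (mkOfSucc 0).op s = X.map (mkOfSucc 0).op s') (h₀ : X.δ 0 s = X.δ 0 s') :
    s = s' := by
  refine (IsStrictSegal.segal (n + 1)).1 (Path.ext' fun i => ?_)
  cases i using Fin.cases with
  | zero => exact h₁
  | succ k =>
    have := congrArg (fun p : X.Path n => p.arrow k) (by rw [← spine_δ₀, ← spine_δ₀, h₀] :
      (X.spine (n + 1) s).interval 1 n = (X.spine (n + 1) s').interval 1 n)
    simpa [Path.arrow_interval _ 1 n k k.succ (hkk' := by simp [add_comm])] using this

theorem IsStrictSegal.exists_of_δ₀ {n : ℕ} (e : X _⦋1⦌) (t : X _⦋n⦌)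
    (h : X.δ 0 e = X.map (SimplexCategory.const ⦋0⦌ ⦋n⦌ 0).op t) :
    ∃ s : X _⦋n + 1⦌, X.map (mkOfSucc 0).op s = e ∧ X.δ 0 s = t := by
  obtain ⟨s, hs⟩ := (IsStrictSegal.segal (n + 1)).2 ((X.spine n t).cons e h)
  refine ⟨s, Path.congr_arrow hs 0, (IsStrictSegal.segal n).1 ?_⟩
  rw [spine_δ₀, hs]
  exact Path.cons_interval_one _ _ _

namespace Edge

variable {x₀ x₁ x₂ x₃ : X _⦋0⦌} {e₀₁ : Edge x₀ x₁} {e₁₂ : Edge x₁ x₂}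

theorem exists_compStruct (e₀₁ : Edge x₀ x₁) (e₁₂ : Edge x₁ x₂) :
    ∃ e₀₂ : Edge x₀ x₂, Nonempty (CompStruct e₀₁ e₁₂ e₀₂) := by
  obtain ⟨s, h₂, h₀⟩ := IsStrictSegal.exists_of_δ₀ (n := 1) e₀₁.edge e₁₂.edge (by
    rw [e₀₁.tgt_eq, ← δ_one_eq_const, ← SimplicialObject.δ_def, e₁₂.src_eq])
  rw [mkOfSucc_zero_eq_δ, ← SimplicialObject.δ_def] at h₂
  obtain ⟨e₀₂, -, h⟩ := CompStruct.exists_of_simplex_faces s h₂ h₀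
  exact ⟨e₀₂, h⟩

theorem CompStruct.unique {e₀₂ e₀₂' : Edge x₀ x₂} (h : CompStruct e₀₁ e₁₂ e₀₂)
    (h' : CompStruct e₀₁ e₁₂ e₀₂') : e₀₂ = e₀₂' := by
  have hs : h.simplex = h'.simplex := IsStrictSegal.ext_of_δ₀ (n := 1)
    (by simp only [mkOfSucc_zero_eq_δ, ← SimplicialObject.δ_def, h.d₂, h'.d₂])
    (by rw [h.d₀, h'.d₀])
  ext
  rw [← h.d₁, ← h'.d₁, hs]

noncomputable def comp (e₀₁ : Edge x₀ x₁) (e₁₂ : Edge x₁ x₂) : Edge x₀ x₂ :=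
  (exists_compStruct e₀₁ e₁₂).choose

theorem comp_eq {e₀₂ : Edge x₀ x₂} (h : CompStruct e₀₁ e₁₂ e₀₂) : e₀₁.comp e₁₂ = e₀₂ :=
  (exists_compStruct e₀₁ e₁₂).choose_spec.some.unique h

theorem comp_edge (s : X _⦋2⦌) (h₂ : X.δ 2 s = e₀₁.edge) (h₀ : X.δ 0 s = e₁₂.edge) :
    (e₀₁.comp e₁₂).edge = X.δ 1 s := by
  obtain ⟨e₀₂, he, ⟨h⟩⟩ := CompStruct.exists_of_simplex_faces s h₂ h₀
  rw [comp_eq h, he]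

theorem comp_edge_of_le {n : ℕ} (x : X _⦋n⦌) {i j k : Fin (n + 1)} (hij : i ≤ j) (hjk : j ≤ k)
    (h₀₁ : e₀₁.edge = X.map (mkOfLe i j hij).op x) (h₁₂ : e₁₂.edge = X.map (mkOfLe j k hjk).op x) :
    (e₀₁.comp e₁₂).edge = X.map (mkOfLe i k (hij.trans hjk)).op x := by
  rw [comp_edge (X.map (mkOfLeComp i j k hij hjk).op x)] <;>
    simp only [SimplicialObject.δ_def, map_op_map_op, h₀₁, h₁₂] <;>
    congr 4 <;> exact Hom.ext_one_left _ _

theorem comp_assoc (e₀₁ : Edge x₀ x₁) (e₁₂ : Edge x₁ x₂) (e₂₃ : Edge x₂ x₃) :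
    (e₀₁.comp e₁₂).comp e₂₃ = e₀₁.comp (e₁₂.comp e₂₃) := by
  obtain ⟨_, ⟨t⟩⟩ := exists_compStruct e₁₂ e₂₃
  obtain ⟨s, hs₁, hs₀⟩ := IsStrictSegal.exists_of_δ₀ (n := 2) e₀₁.edge t.simplex (by
    refine e₀₁.tgt_eq.trans (e₁₂.src_eq.symm.trans ?_)
    rw [← t.d₂, SimplicialObject.δ_def, SimplicialObject.δ_def, map_op_map_op]
    congr 4; decide)
  have h₀₁ : e₀₁.edge = X.map (mkOfLe 0 1 (by decide)).op s := by
    rw [← hs₁]; rfl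
  have h₁₂ : e₁₂.edge = X.map (mkOfLe 1 2 (by decide)).op s := by
    rw [← t.d₂, ← hs₀, SimplicialObject.δ_def, SimplicialObject.δ_def, map_op_map_op]
    congr 4; decide
  have h₂₃ : e₂₃.edge = X.map (mkOfLe 2 3 (by decide)).op s := by
    rw [← t.d₀, ← hs₀, SimplicialObject.δ_def, SimplicialObject.δ_def, map_op_map_op]
    congr 4; decide
  ext
  rw [comp_edge_of_le s _ _ (comp_edge_of_le s _ _ h₀₁ h₁₂) h₂₃,
    comp_edge_of_le s _ _ h₀₁ (comp_edge_of_le s _ _ h₁₂ h₂₃)]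

end Edge

def EdgeCategory (X : SSet.{u}) : Type u := X _⦋0⦌

noncomputable instance : SmallCategory X.EdgeCategory where
  Hom x₀ x₁ := Edge (X := X) x₀ x₁
  id x₀ := Edge.id x₀
  comp := Edge.comp
  id_comp e := Edge.comp_eq (Edge.CompStruct.idComp e)
  comp_id e := Edge.comp_eq (Edge.CompStruct.compId e)
  assoc := Edge.comp_assoc

namespace EdgeCategory

theorem hom_ext_of_edge_eq {a b a' b' : X.EdgeCategory} (f : a ⟶ b) (g : a' ⟶ b') (ha : a = a')
    (hb : b' = b) (h : Edge.edge f = Edge.edge g) : f = eqToHom ha ≫ g ≫ eqToHom hb := by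
  subst ha hb
  simpa using Edge.ext h

noncomputable def ofSimplex {n : ℕ} (x : X _⦋n⦌) : ComposableArrows X.EdgeCategory n where
  obj i := (X.spine n x).vertex i
  map {i j} f := Edge.mk (X.map (mkOfLe i j (leOfHom f)).op x)
    (by rw [SimplicialObject.δ_def, map_op_map_op]; congr 4; exact Hom.ext_zero_left _ _)
    (by rw [SimplicialObject.δ_def, map_op_map_op]; congr 4; exact Hom.ext_zero_left _ _)
  map_id i := Edge.ext <| by
    show X.map (mkOfLe i i le_rfl).op x = X.σ 0 (X.map (SimplexCategory.const ⦋0⦌ ⦋n⦌ i).op x)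
    rw [SimplicialObject.σ_def, map_op_map_op]; congr 4; exact Hom.ext_one_left _ _
  map_comp f g := Edge.ext (Edge.comp_edge_of_le x (leOfHom f) (leOfHom g) rfl rfl).symm

theorem ofSimplex_map {m n : ℕ} (ψ : ⦋m⦌ ⟶ ⦋n⦌) (x : X _⦋n⦌) :
    ofSimplex (X.map ψ.op x) =
      (ofSimplex x).whiskerLeft (SimplexCategory.toCat.map ψ).toFunctor := by
  refine CategoryTheory.Functor.ext (F := ofSimplex (X.map ψ.op x)) (fun i => ?_) fun i j f => ?_
  · exact spine_map_vertex X n x ψ i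
  refine hom_ext_of_edge_eq _ _ _ _ ?_
  show X.map (mkOfLe i j _).op (X.map ψ.op x) =
    X.map (mkOfLe (ψ.toOrderHom i) (ψ.toOrderHom j) _).op x
  rw [map_op_map_op]
  congr 4
  exact Hom.ext_one_left _ _

end EdgeCategory

noncomputable def toNerve (X : SSet.{u}) [X.IsStrictSegal] : X ⟶ nerve X.EdgeCategory where
  app n := ↾fun x => EdgeCategory.ofSimplex (n := n.unop.len) x
  naturality m n ψ := by
    ext x
    exact EdgeCategory.ofSimplex_map ψ.unop x

theorem toNerve_app_zero_bijective : Function.Bijective ((toNerve X).app (op ⦋0⦌)) := by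
  refine (Equiv.comp_bijective _ nerveEquiv).1 ?_
  have hid : nerveEquiv ∘ (toNerve X).app (op ⦋0⦌) = id := funext fun x => by
    show X.map (SimplexCategory.const ⦋0⦌ ⦋0⦌ 0).op x = x
    rw [const_eq_id, op_id, Functor.map_id_apply]
  rw [hid]
  exact Function.bijective_id

theorem toNerve_app_one_bijective : Function.Bijective ((toNerve X).app (op ⦋1⦌)) := by
  have hx : ∀ x : X _⦋1⦌, X.map (mkOfLe 0 1 (by decide)).op x = x := fun x => by
    rw [show mkOfLe (0 : Fin 2) 1 _ = 𝟙 _ from Hom.ext_one_left _ _, op_id, Functor.map_id_apply]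
  refine ⟨fun x y h => ?_, fun (F : ComposableArrows X.EdgeCategory 1) =>
    ⟨Edge.edge (F.map' 0 1), ?_⟩⟩
  · rw [← hx x, ← hx y]
    exact congrArg (fun F : ComposableArrows X.EdgeCategory 1 => Edge.edge (F.map' 0 1)) h
  · have left : (EdgeCategory.ofSimplex (Edge.edge (F.map' 0 1))).left = F.left := by
      show X.map (SimplexCategory.const ⦋0⦌ ⦋1⦌ 0).op _ = _
      rw [← δ_one_eq_const, ← SimplicialObject.δ_def]
      exact Edge.src_eq _
    have right : (EdgeCategory.ofSimplex (Edge.edge (F.map' 0 1))).right = F.right := by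
      show X.map (SimplexCategory.const ⦋0⦌ ⦋1⦌ 1).op _ = _
      rw [← δ_zero_eq_const, ← SimplicialObject.δ_def]
      exact Edge.tgt_eq _
    exact ComposableArrows.ext₁ left right (EdgeCategory.hom_ext_of_edge_eq _ _ _ _ (hx _))

noncomputable def isoNerve (X : SSet.{u}) [X.IsStrictSegal] : X ≅ nerve X.EdgeCategory :=
  have := IsStrictSegal.isIso_of_bijective_app_zero_one (toNerve X) toNerve_app_zero_bijective
    toNerve_app_one_bijective
  asIso (toNerve X)

end IsStrictSegal

end SSet

namespace Paper

theorem iterD2_eq (X : SSet.{u}) (n : ℕ) (x : X _⦋n + 1⦌) :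
    iterD2 X n x = X.map (mkOfSucc 0).op x := by
  induction n with
  | zero => simp [iterD2]
  | succ n ih =>
    show iterD2 X n (X.δ 2 x) = _
    rw [ih, SimplicialObject.δ_def, SSet.map_op_map_op,
      mkOfSucc_δ_lt (by simp [Fin.lt_def, Nat.mod_eq_of_lt]), Fin.castSucc_zero]

theorem iterD1_eq (X : SSet.{u}) (n : ℕ) (x : X _⦋n⦌) :
    iterD1 X n x = X.map (SimplexCategory.const ⦋0⦌ ⦋n⦌ 0).op x := by
  induction n with
  | zero => rw [const_eq_id, op_id, Functor.map_id_apply]; rfl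
  | succ n ih =>
    show iterD1 X n (X.δ 1 x) = _
    rw [ih, SimplicialObject.δ_def, SSet.map_op_map_op, const_comp]
    rfl

/-- Lemma 6.4: a simplicial set `X` in which every `n`-simplex (`n ≥ 2`) is uniquely
determined by its first edge and its `0`-th face (via the bijections `Dₙ`) is isomorphic to
the nerve of a category with objects `X₀` and morphisms `X₁`, where `f ∈ X₁` is a morphism
`d₀ f ⟶ d₁ f`, identities are `s₀ x`, and composition is `f₁ ∘ f₂ = d₁ (D₂⁻¹ (f₁, f₂))`. -/
theorem statement5 (X : SSet.{u})
    (hD : ∀ n : ℕ, Set.BijOn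
      (fun x : X _⦋n + 2⦌ => ((iterD2 X (n + 1) x, X.δ 0 x) : X _⦋1⦌ × X _⦋n + 1⦌))
      Set.univ
      {q : X _⦋1⦌ × X _⦋n + 1⦌ | X.δ 0 q.1 = iterD1 X (n + 1) q.2}) :
    ∃ (C : Type u) (inst : SmallCategory C) (e : C ≃ X _⦋0⦌),
      @NerveCompat X C inst e := by
  have : X.IsStrictSegal := SSet.isStrictSegal_of_bijOn fun n => by
    simpa only [iterD2_eq, iterD1_eq] using hD n
  -- the paper's arrows `f : d₀ f ⟶ d₁ f` run against the edges `d₁ f ⟶ d₀ f` of `EdgeCategory`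
  refine ⟨X.EdgeCategoryᵒᵖ, inferInstance, Opposite.equivToOpposite.symm,
    fun a b => (opEquiv a b).trans SSet.Edge.equivSubtype, fun a => rfl,
    fun a b c f g x h₂ h₀ => SSet.Edge.comp_edge x h₂ h₀,
    ⟨SSet.isoNerve X ≪≫ nerveOpOpIso _⟩⟩

end Paper
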